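/- Let U : 𝓢(ℝⁿ) → 𝓢(ℝⁿ) be a bijection satisfying, for all f, g ∈ 𝓢(ℝⁿ): (1) U(f + g*) = U(f) + (U(g))*, where h*(x) := conj(h(−x)); (2) U(f·g) = U(f)·U(g); (3) U(f ⋆ g) = U(f) ⋆ U(g). Let φ : ℝⁿ → ℝⁿ be a bijection satisfying φ(Supp f) = Supp (U f) for every f ∈ 𝓢(ℝⁿ), and let m : ℂ → ℂ be a function with m(0) = 0 such that U(α f)(x) = m(α)·(U f)(x) for every nonzero α ∈ ℂ, f ∈ 𝓢(ℝⁿ), and x ∈ ℝⁿ. Then (U f)(φ(x₀)) = m(f(x₀)) for every f ∈ 𝓢(ℝⁿ) and every x₀ ∈ ℝⁿ. -/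
import Mathlib


open MeasureTheory Topology Metric
open scoped FourierTransform ComplexConjugate SchwartzMap ContDiff

namespace Stmt14Aux

variable {E : Type*} [NormedAddCommGroup E] [InnerProductSpace ℝ E] [FiniteDimensional ℝ E]

lemma schwartz_temperate (f : 𝓢(E, ℂ)) : Function.HasTemperateGrowth ⇑f := by
  refine ⟨f.smooth ⊤, fun N => ?_⟩
  obtain ⟨C, hC⟩ := f.decay 0 N
  exact ⟨0, C, fun x => by simpa using hC.2 x⟩

/-- Pointwise product of Schwartz maps. -/
noncomputable def pmul (f g : 𝓢(E, ℂ)) : 𝓢(E, ℂ) :=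
  SchwartzMap.bilinLeftCLM (ContinuousLinearMap.mul ℝ ℂ) (schwartz_temperate g) f

@[simp] lemma pmul_apply (f g : 𝓢(E, ℂ)) (x : E) : pmul f g x = f x * g x := rfl

/-- A compactly supported smooth function is Schwartz. -/
noncomputable def ofCS (f : E → ℂ) (hsm : ContDiff ℝ ∞ f) (hcs : HasCompactSupport f) :
    𝓢(E, ℂ) where
  toFun := f
  smooth' := hsm
  decay' := by
    intro k N
    have hcs' : HasCompactSupport fun x => ‖x‖ ^ k * ‖iteratedFDeriv ℝ N f x‖ :=
      ((hcs.iteratedFDeriv N).norm).mul_left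
    have hcont : Continuous fun x => ‖x‖ ^ k * ‖iteratedFDeriv ℝ N f x‖ :=
      ((continuous_norm.pow k).mul (hsm.continuous_iteratedFDeriv (by exact_mod_cast le_top)).norm)
    obtain ⟨C, hC⟩ := hcs'.exists_bound_of_continuous hcont
    refine ⟨C, fun x => ?_⟩
    have := hC x
    calc ‖x‖ ^ k * ‖iteratedFDeriv ℝ N f x‖
        ≤ ‖‖x‖ ^ k * ‖iteratedFDeriv ℝ N f x‖‖ := le_abs_self _
      _ ≤ C := this

@[simp] lemma ofCS_apply (f : E → ℂ) (hsm hcs) (x : E) : ofCS f hsm hcs x = f x := rfl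

/-- Bump functions as Schwartz maps. -/
lemma exists_bump (x₀ : E) {s : Set E} (hs : IsOpen s) (hx : x₀ ∈ s) :
    ∃ χ : 𝓢(E, ℂ), tsupport ⇑χ ⊆ s ∧ HasCompactSupport ⇑χ ∧ ∀ᶠ x in 𝓝 x₀, χ x = 1 := by
  obtain ⟨ε, hε, hball⟩ := Metric.nhds_basis_closedBall.mem_iff.mp (hs.mem_nhds hx)
  set b : ContDiffBump x₀ := ⟨ε / 2, ε, by positivity, by linarith⟩ with hb
  have hsm : ContDiff ℝ ∞ fun x => ((b x : ℝ) : ℂ) :=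
    Complex.ofRealCLM.contDiff.comp b.contDiff
  have hcs : HasCompactSupport fun x => ((b x : ℝ) : ℂ) :=
    b.hasCompactSupport.comp_left (g := Complex.ofReal) Complex.ofReal_zero
  refine ⟨ofCS _ hsm hcs, ?_, hcs, ?_⟩
  · have h1 : Function.support (fun x => ((b x : ℝ) : ℂ)) ⊆ Function.support ⇑b :=
      Function.support_comp_subset Complex.ofReal_zero _
    have h2 : tsupport (fun x => ((b x : ℝ) : ℂ)) ⊆ tsupport ⇑b := closure_mono h1
    refine fun x hxa => hball ?_
    have := h2 hxa
    rw [b.tsupport_eq] at this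
    exact this
  · have : Metric.closedBall x₀ (ε / 2) ∈ 𝓝 x₀ := Metric.closedBall_mem_nhds _ (by positivity)
    filter_upwards [this] with x hx
    show ((b x : ℝ) : ℂ) = 1
    rw [b.one_of_mem_closedBall hx]
    norm_num

section Abstract

variable {W : 𝓢(E, ℂ) → 𝓢(E, ℂ)} {ψ : E → E}

lemma loc (hψ : Function.Injective ψ)
    (hWadd : ∀ f g : 𝓢(E, ℂ), W (f + g) = W f + W g)
    (hWsupp : ∀ f : 𝓢(E, ℂ), ψ '' tsupport ⇑f = tsupport ⇑(W f))
    {f g : 𝓢(E, ℂ)} {x₀ : E} (h : ⇑f =ᶠ[𝓝 x₀] ⇑g) : W f (ψ x₀) = W g (ψ x₀) := by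
  have hd : x₀ ∉ tsupport ⇑(f - g) := by
    rw [notMem_tsupport_iff_eventuallyEq]
    filter_upwards [h] with x hx
    simp [SchwartzMap.sub_apply, hx]
  have h2 : ψ x₀ ∉ tsupport ⇑(W (f - g)) := by
    rw [← hWsupp]
    rintro ⟨y, hy, hyx⟩
    exact hd (hψ hyx ▸ hy)
  have h3 : W (f - g) (ψ x₀) = 0 := image_eq_zero_of_notMem_tsupport h2
  have h4 : g + (f - g) = f := by abel
  calc W f (ψ x₀) = W (g + (f - g)) (ψ x₀) := by rw [h4]
    _ = W g (ψ x₀) + W (f - g) (ψ x₀) := by rw [hWadd]; rfl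
    _ = W g (ψ x₀) := by rw [h3, add_zero]

lemma chi_eval (hW : Function.Bijective W) (hψ : Function.Injective ψ)
    (hWadd : ∀ f g : 𝓢(E, ℂ), W (f + g) = W f + W g)
    (hWsupp : ∀ f : 𝓢(E, ℂ), ψ '' tsupport ⇑f = tsupport ⇑(W f))
    (hWmul : ∀ f g : 𝓢(E, ℂ), ∀ x, W (pmul f g) x = W f x * W g x)
    {χ : 𝓢(E, ℂ)} {x₀ : E} (hχ : ∀ᶠ x in 𝓝 x₀, χ x = 1) : W χ (ψ x₀) = 1 := by
  obtain ⟨G, -, -, hG1⟩ := exists_bump (ψ x₀) isOpen_univ (Set.mem_univ _)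
  obtain ⟨f, rfl⟩ := hW.2 G
  have hfval : W f (ψ x₀) = 1 := hG1.self_of_nhds
  have hloc : W (pmul f χ) (ψ x₀) = W f (ψ x₀) := by
    refine loc hψ hWadd hWsupp ?_
    filter_upwards [hχ] with x hx
    simp [hx]
  have hmul := hWmul f χ (ψ x₀)
  rw [hloc, hfval] at hmul
  rw [one_mul] at hmul
  exact hmul.symm

lemma eval_ne_zero (hW : Function.Bijective W) (hψ : Function.Injective ψ)
    (hWadd : ∀ f g : 𝓢(E, ℂ), W (f + g) = W f + W g)
    (hWsupp : ∀ f : 𝓢(E, ℂ), ψ '' tsupport ⇑f = tsupport ⇑(W f))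
    (hWmul : ∀ f g : 𝓢(E, ℂ), ∀ x, W (pmul f g) x = W f x * W g x)
    {f : 𝓢(E, ℂ)} {x₀ : E} (hf : f x₀ ≠ 0) : W f (ψ x₀) ≠ 0 := by
  have hs : IsOpen {x : E | f x ≠ 0} := by
    have : {x : E | f x ≠ 0} = (⇑f) ⁻¹' ({0}ᶜ) := rfl
    rw [this]
    exact isOpen_compl_singleton.preimage f.continuous
  obtain ⟨χ, hχsupp, hχcs, hχ1⟩ := exists_bump x₀ hs hf
  -- the "inverse" function h = χ / f
  have hsm : ContDiff ℝ ∞ fun x => χ x * (f x)⁻¹ := by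
    rw [contDiff_iff_contDiffAt]
    intro x
    by_cases hx : f x = 0
    · have hxn : x ∉ tsupport ⇑χ := fun hmem => (hχsupp hmem) hx
      rw [notMem_tsupport_iff_eventuallyEq] at hxn
      refine contDiffAt_const (c := 0) |>.congr_of_eventuallyEq ?_
      filter_upwards [hxn] with y hy
      simp [hy]
    · exact ((χ.smooth ⊤).contDiffAt).mul (((f.smooth ⊤).contDiffAt).inv hx)
  have hcs : HasCompactSupport fun x => χ x * (f x)⁻¹ := hχcs.mul_right
  set h : 𝓢(E, ℂ) := ofCS _ hsm hcs with hh
  have hkey : pmul f h = χ := by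
    apply SchwartzMap.ext
    intro x
    by_cases hx : f x = 0
    · have hxn : x ∉ tsupport ⇑χ := fun hmem => (hχsupp hmem) hx
      have : χ x = 0 := image_eq_zero_of_notMem_tsupport hxn
      simp [hh, hx, this]
    · have : f x * (χ x * (f x)⁻¹) = χ x := by field_simp
      simpa [hh] using this
  have hone : W χ (ψ x₀) = 1 := chi_eval hW hψ hWadd hWsupp hWmul hχ1
  have := hWmul f h (ψ x₀)
  rw [hkey, hone] at this
  exact left_ne_zero_of_mul_eq_one this.symm

end Abstract

/-- The conjugate of a Schwartz map. -/
noncomputable def conjS (g : 𝓢(E, ℂ)) : 𝓢(E, ℂ) where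
  toFun := fun x => conj (g x)
  smooth' := by
    have : (fun x => conj (g x)) = ⇑(RCLike.conjCLE (K := ℂ)).toContinuousLinearMap ∘ ⇑g := by
      funext x
      simp [RCLike.conjCLE_apply]
    rw [this]
    exact (RCLike.conjCLE (K := ℂ)).toContinuousLinearMap.contDiff.comp (g.smooth ⊤)
  decay' := by
    intro k N
    obtain ⟨C, -, hC⟩ := g.decay k N
    refine ⟨C, fun x => ?_⟩
    have heq : (fun x => conj (g x)) = ⇑(RCLike.conjLIE (K := ℂ)) ∘ ⇑g := by
      funext x
      simp [RCLike.conjLIE_apply]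
    rw [heq, LinearIsometryEquiv.norm_iteratedFDeriv_comp_left]
    exact hC x

@[simp] lemma conjS_apply (g : 𝓢(E, ℂ)) (x : E) : conjS g x = conj (g x) := rfl

/-- Composition with `-x`. -/
noncomputable def negS (g : 𝓢(E, ℂ)) : 𝓢(E, ℂ) :=
  SchwartzMap.compCLMOfContinuousLinearEquiv ℝ
    (LinearIsometryEquiv.neg ℝ (E := E)).toContinuousLinearEquiv g

@[simp] lemma negS_apply (g : 𝓢(E, ℂ)) (x : E) : negS g x = g (-x) := rfl

end Stmt14Aux

open Stmt14Aux

theorem stmt14 (n : ℕ)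
    (U : SchwartzMap (EuclideanSpace ℝ (Fin n)) ℂ → SchwartzMap (EuclideanSpace ℝ (Fin n)) ℂ)
    (hbij : Function.Bijective U)
    (h1 : ∀ f g fg : SchwartzMap (EuclideanSpace ℝ (Fin n)) ℂ,
      (∀ x, fg x = f x + conj (g (-x))) →
      ∀ x, U fg x = U f x + conj (U g (-x)))
    (h2 : ∀ f g fg : SchwartzMap (EuclideanSpace ℝ (Fin n)) ℂ,
      (∀ x, fg x = f x * g x) →
      ∀ x, U fg x = U f x * U g x)
    (h3 : ∀ f g fg : SchwartzMap (EuclideanSpace ℝ (Fin n)) ℂ,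
      (∀ x, fg x = ∫ y, f (x - y) * g y) →
      ∀ x, U fg x = ∫ y, U f (x - y) * U g y)
    (φ : EuclideanSpace ℝ (Fin n) → EuclideanSpace ℝ (Fin n))
    (hφbij : Function.Bijective φ)
    (hφ : ∀ f : SchwartzMap (EuclideanSpace ℝ (Fin n)) ℂ, φ '' tsupport (⇑f) = tsupport (⇑(U f)))
    (m : ℂ → ℂ) (hm0 : m 0 = 0)
    (hm : ∀ α : ℂ, α ≠ 0 → ∀ f : SchwartzMap (EuclideanSpace ℝ (Fin n)) ℂ, ∀ x, U (α • f) x = m α * U f x) :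
    ∀ f : SchwartzMap (EuclideanSpace ℝ (Fin n)) ℂ, ∀ x₀ : EuclideanSpace ℝ (Fin n),
      U f (φ x₀) = m (f x₀) := by
  -- U 0 = 0
  have hU0 : U 0 = 0 := by
    have hts : tsupport ⇑(U (0 : SchwartzMap (EuclideanSpace ℝ (Fin n)) ℂ)) = ∅ := by
      rw [← hφ]
      simp [tsupport]
    apply SchwartzMap.ext
    intro x
    have : x ∉ tsupport ⇑(U (0 : SchwartzMap (EuclideanSpace ℝ (Fin n)) ℂ)) := by simp [hts]
    simpa using image_eq_zero_of_notMem_tsupport this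
  -- additivity of U
  have hUadd : ∀ f g : SchwartzMap (EuclideanSpace ℝ (Fin n)) ℂ, U (f + g) = U f + U g := by
    intro f g
    set g' := conjS (negS g) with hg'
    have hg'x : ∀ x, conj (g' (-x)) = g x := by
      intro x; simp [hg']
    have e1 : ∀ x, (f + g) x = f x + conj (g' (-x)) := by
      intro x; rw [hg'x]; rfl
    have e0 : ∀ x, g x = (0 : SchwartzMap (EuclideanSpace ℝ (Fin n)) ℂ) x + conj (g' (-x)) := by
      intro x; rw [hg'x]; simp
    have H1 := h1 f g' (f + g) e1
    have H0 := h1 0 g' g e0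
    apply SchwartzMap.ext
    intro x
    rw [H1 x, SchwartzMap.add_apply]
    have h0x := H0 x
    rw [hU0] at h0x
    simp only [SchwartzMap.zero_apply, zero_add] at h0x
    rw [← h0x]
  -- multiplicativity of U in pmul form
  have hUmul : ∀ f g : SchwartzMap (EuclideanSpace ℝ (Fin n)) ℂ, ∀ x, U (pmul f g) x = U f x * U g x := by
    intro f g x
    exact h2 f g (pmul f g) (fun y => rfl) x
  -- inverse maps
  set eU := Equiv.ofBijective U hbij with heU
  set V : SchwartzMap (EuclideanSpace ℝ (Fin n)) ℂ → SchwartzMap (EuclideanSpace ℝ (Fin n)) ℂ := ⇑eU.symm with hV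
  have hUV : ∀ g, U (V g) = g := fun g => eU.apply_symm_apply g
  have hVU : ∀ f, V (U f) = f := fun f => eU.symm_apply_apply f
  have hVbij : Function.Bijective V := eU.symm.bijective
  set eφ := Equiv.ofBijective φ hφbij with heφ
  set ψ : EuclideanSpace ℝ (Fin n) → EuclideanSpace ℝ (Fin n) := ⇑eφ.symm with hψdef
  have hψφ : ∀ x, ψ (φ x) = x := fun x => eφ.symm_apply_apply x
  have hφψ : ∀ x, φ (ψ x) = x := fun x => eφ.apply_symm_apply x
  have hψinj : Function.Injective ψ := eφ.symm.injective
  have hVadd : ∀ a b : SchwartzMap (EuclideanSpace ℝ (Fin n)) ℂ, V (a + b) = V a + V b := by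
    intro a b
    apply hbij.1
    rw [hUV, hUadd, hUV, hUV]
  have hVmul : ∀ a b : SchwartzMap (EuclideanSpace ℝ (Fin n)) ℂ, ∀ x, V (pmul a b) x = V a x * V b x := by
    intro a b x
    have hq : U (pmul (V a) (V b)) = pmul a b := by
      apply SchwartzMap.ext
      intro y
      rw [hUmul, hUV, hUV]
      rfl
    have : V (pmul a b) = pmul (V a) (V b) := by rw [← hq, hVU]
    rw [this]
    rfl
  have hVsupp : ∀ a : SchwartzMap (EuclideanSpace ℝ (Fin n)) ℂ,
      ψ '' tsupport ⇑a = tsupport ⇑(V a) := by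
    intro a
    have h1' : φ '' tsupport ⇑(V a) = tsupport ⇑a := by rw [hφ (V a), hUV]
    rw [← h1', ← Set.image_comp]
    have : (ψ ∘ φ) = id := funext hψφ
    rw [this, Set.image_id]
  -- main argument
  intro f x₀
  obtain ⟨χ, -, -, hχ1⟩ := exists_bump (E := EuclideanSpace ℝ (Fin n)) x₀ isOpen_univ (Set.mem_univ _)
  set α := f x₀ with hα
  have hχx₀ : χ x₀ = 1 := hχ1.self_of_nhds
  have hd0 : (f - α • χ) x₀ = 0 := by
    simp [SchwartzMap.sub_apply, SchwartzMap.smul_apply, hχx₀, hα]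
  have hUd : U (f - α • χ) (φ x₀) = 0 := by
    by_contra hne
    have := eval_ne_zero (W := V) (ψ := ψ) hVbij hψinj hVadd hVsupp hVmul
      (f := U (f - α • χ)) (x₀ := φ x₀) hne
    rw [hVU, hψφ] at this
    exact this hd0
  have hsum : U f (φ x₀) = U (α • χ) (φ x₀) + U (f - α • χ) (φ x₀) := by
    have h4 : α • χ + (f - α • χ) = f := by abel
    conv_lhs => rw [← h4]
    rw [hUadd]
    rfl
  by_cases hα0 : α = 0
  · rw [hsum, hUd, add_zero, hα0, zero_smul, hU0, hm0]
    simp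
  · have hχeval : U χ (φ x₀) = 1 :=
      chi_eval (W := U) (ψ := φ) hbij hφbij.1 hUadd (fun g => hφ g) hUmul hχ1
    rw [hsum, hUd, add_zero, hm α hα0 χ (φ x₀), hχeval, mul_one]
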